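/- There is a number M > 0 such that for any two orthogonal lines in ℝ², the set Γ = {(t, t²) : t ≥ M} intersects the union of the two lines in at most 3 points. -/

import Mathlib

open scoped InnerProductSpace

/-- The moment curve in `ℝ²`: `γ(t) = (t, t²)`. -/
noncomputable def momentCurve2 : ℝ → EuclideanSpace ℝ (Fin 2) :=
  fun t => WithLp.toLp 2 (fun i => t ^ ((i : ℕ) + 1))

lemma momentCurve2_injective : Function.Injective momentCurve2 := by
  intro s t h
  have := congrArg (fun x : EuclideanSpace ℝ (Fin 2) => x 0) h
  simpa [momentCurve2] using this

lemma inner_momentCurve (t : ℝ) (u : EuclideanSpace ℝ (Fin 2)) :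
    ⟪momentCurve2 t, u⟫_ℝ = u 0 * t + u 1 * t ^ 2 := by
  simp [momentCurve2, PiLp.inner_apply, Fin.sum_univ_two, RCLike.inner_apply]

lemma sum_rel {a b c s t : ℝ} (hs : a * s + b * s ^ 2 = c) (ht : a * t + b * t ^ 2 = c)
    (hst : s ≠ t) : a + b * (s + t) = 0 := by
  have h2 : (s - t) * (a + b * (s + t)) = 0 := by linear_combination hs - ht
  rcases mul_eq_zero.mp h2 with h | h
  · exact absurd (sub_eq_zero.mp h) hst
  · exact h

lemma neg_prod {a b c s t : ℝ} (hab : a ≠ 0 ∨ b ≠ 0)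
    (hs1 : 1 ≤ s) (ht1 : 1 ≤ t) (hst : s ≠ t)
    (hs : a * s + b * s ^ 2 = c) (ht : a * t + b * t ^ 2 = c) : a * b < 0 := by
  have hrel := sum_rel hs ht hst
  have hb : b ≠ 0 := by
    rintro rfl
    simp at hrel
    rcases hab with h | h
    · exact h hrel
    · exact h rfl
  have hb2 : 0 < b ^ 2 := lt_of_le_of_ne (sq_nonneg b) (Ne.symm (pow_ne_zero 2 hb))
  have hab' : a * b = -(b ^ 2) * (s + t) := by linear_combination b * hrel
  nlinarith [hb2, hab']

lemma roots_encard_le_two {a b c : ℝ} (hab : a ≠ 0 ∨ b ≠ 0) (R : Set ℝ)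
    (hR : ∀ r ∈ R, a * r + b * r ^ 2 = c) : R.encard ≤ 2 := by
  by_cases h : ∃ s ∈ R, ∃ t ∈ R, s ≠ t
  · obtain ⟨s, hs, t, ht, hst⟩ := h
    have hsub : R ⊆ {s, t} := by
      intro r hr
      by_contra hrc
      simp only [Set.mem_insert_iff, Set.mem_singleton_iff, not_or] at hrc
      obtain ⟨hrs, hrt⟩ := hrc
      have h1 := sum_rel (hR r hr) (hR s hs) hrs
      have h2 := sum_rel (hR r hr) (hR t ht) hrt
      have hb : b = 0 := by
        have : b * (s - t) = 0 := by linarith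
        rcases mul_eq_zero.mp this with h | h
        · exact h
        · exact absurd (sub_eq_zero.mp h) hst
      have ha : a = 0 := by
        rw [hb] at h1; linarith
      rcases hab with h | h
      · exact h ha
      · exact h hb
    calc R.encard ≤ ({s, t} : Set ℝ).encard := Set.encard_mono hsub
      _ = 2 := Set.encard_pair hst
  · push_neg at h
    have h1 : R.encard ≤ 1 := Set.encard_le_one_iff.mpr fun x y hx hy => h x hx y hy
    exact h1.trans (by norm_num)

lemma comp_ne_zero (u : EuclideanSpace ℝ (Fin 2)) (hu : ‖u‖ = 1) :
    u 0 ≠ 0 ∨ u 1 ≠ 0 := by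
  by_contra h
  push_neg at h
  have hz : u = 0 := by
    ext i
    fin_cases i
    · exact h.1
    · exact h.2
  rw [hz] at hu
  simp at hu

/-- There is `M > 0` such that for any two orthogonal lines in `ℝ²`,
the set `Γ = {(t, t²) : t ≥ M}` meets the union of the two lines in at most 3 points. -/
theorem tail_meets_orthogonal_lines_in_at_most_three_points :
    ∃ M : ℝ, 0 < M ∧
      ∀ (u₁ u₂ : EuclideanSpace ℝ (Fin 2)) (c₁ c₂ : ℝ),
        ‖u₁‖ = 1 → ‖u₂‖ = 1 → ⟪u₁, u₂⟫_ℝ = 0 →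
        (momentCurve2 '' Set.Ici M ∩
          ({x | ⟪x, u₁⟫_ℝ = c₁} ∪ {x | ⟪x, u₂⟫_ℝ = c₂})).encard ≤ 3 := by
  refine ⟨1, one_pos, ?_⟩
  intro u₁ u₂ c₁ c₂ h1 h2 horth
  have hu₁ := comp_ne_zero u₁ h1
  have hu₂ := comp_ne_zero u₂ h2
  have horth' : u₁ 0 * u₂ 0 + u₁ 1 * u₂ 1 = 0 := by
    rw [← horth]
    simp [PiLp.inner_apply, Fin.sum_univ_two, RCLike.inner_apply]
    ring
  set L : Set (EuclideanSpace ℝ (Fin 2)) :=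
    {x | ⟪x, u₁⟫_ℝ = c₁} ∪ {x | ⟪x, u₂⟫_ℝ = c₂} with hL
  set S₁ : Set ℝ := {t | 1 ≤ t ∧ u₁ 0 * t + u₁ 1 * t ^ 2 = c₁} with hS₁
  set S₂ : Set ℝ := {t | 1 ≤ t ∧ u₂ 0 * t + u₂ 1 * t ^ 2 = c₂} with hS₂
  have himg : momentCurve2 '' Set.Ici 1 ∩ L = momentCurve2 '' (S₁ ∪ S₂) := by
    rw [← Set.image_inter_preimage]
    have hset : Set.Ici (1:ℝ) ∩ momentCurve2 ⁻¹' L = S₁ ∪ S₂ := by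
      ext t
      simp only [Set.mem_inter_iff, Set.mem_Ici, Set.mem_preimage, hL, Set.mem_union,
        Set.mem_setOf_eq, inner_momentCurve, hS₁, hS₂]
      constructor
      · rintro ⟨h1, h2 | h2⟩
        · exact Or.inl ⟨h1, by linarith⟩
        · exact Or.inr ⟨h1, by linarith⟩
      · rintro (⟨h1, h2⟩ | ⟨h1, h2⟩)
        · exact ⟨h1, Or.inl (by linarith)⟩
        · exact ⟨h1, Or.inr (by linarith)⟩
    rw [hset]
  rw [himg, (momentCurve2_injective.injOn).encard_image]
  have key : ¬ ((∃ s ∈ S₁, ∃ t ∈ S₁, s ≠ t) ∧ (∃ s ∈ S₂, ∃ t ∈ S₂, s ≠ t)) := by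
    rintro ⟨⟨s, ⟨hs1, hse⟩, t, ⟨ht1, hte⟩, hst⟩, ⟨s', ⟨hs1', hse'⟩, t', ⟨ht1', hte'⟩, hst'⟩⟩
    have p1 := neg_prod hu₁ hs1 ht1 hst hse hte
    have p2 := neg_prod hu₂ hs1' ht1' hst' hse' hte'
    have hkey : (u₁ 0 * u₁ 1) * (u₂ 0 * u₂ 1) = -(u₁ 1 * u₂ 1) ^ 2 := by
      linear_combination (u₁ 1 * u₂ 1) * horth'
    nlinarith [sq_nonneg (u₁ 1 * u₂ 1), mul_pos_of_neg_of_neg p1 p2, hkey]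
  have hc1 : S₁.encard ≤ 2 := roots_encard_le_two hu₁ S₁ (fun r hr => hr.2)
  have hc2 : S₂.encard ≤ 2 := roots_encard_le_two hu₂ S₂ (fun r hr => hr.2)
  have hone : S₁.encard ≤ 1 ∨ S₂.encard ≤ 1 := by
    by_cases h : ∃ s ∈ S₁, ∃ t ∈ S₁, s ≠ t
    · right
      by_cases h' : ∃ s ∈ S₂, ∃ t ∈ S₂, s ≠ t
      · exact absurd ⟨h, h'⟩ key
      · push_neg at h'
        exact Set.encard_le_one_iff.mpr fun x y hx hy => h' x hx y hy
    · left
      push_neg at h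
      exact Set.encard_le_one_iff.mpr fun x y hx hy => h x hx y hy
  calc (S₁ ∪ S₂).encard ≤ S₁.encard + S₂.encard := Set.encard_union_le _ _
    _ ≤ 3 := by
        rcases hone with h | h
        · calc S₁.encard + S₂.encard ≤ 1 + 2 := add_le_add h hc2
            _ = 3 := by norm_num
        · calc S₁.encard + S₂.encard ≤ 2 + 1 := add_le_add hc1 h
            _ = 3 := by norm_num
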